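/- arXiv:math/9912146 — 2 statements merged into one kernel-verified Lean document; each statement's English description precedes it below -/
import Mathlib

section
/- Let D = E + Zγ₃ + ⋯ + Zγ_l where E = Z(α₁−α₂) + Z(α₂−α₃). Then the index of D + Zα₂ in the group D + Zα₂ relative to D, i.e. |D + Zα₂ : D|, equals lcm(3, 4, …, l). -/
/-!
For `3 ≤ r ≤ l` the sum of the first `r` coordinates is divisible by `r` on every generator of
`D`, hence on `D`, and it sends `m • α₂` to `m`; so `lcm(3, …, l)` divides every `m` with
`m • α₂ ∈ D`. Conversely, with `σ_r = α₁ + ⋯ + α_r` we have `γ_r = (r + 1) σ_r - r σ_{r+1}` and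
`σ_l = γ_l`, so for `N = lcm(3, …, l)` the vectors `(N / r) σ_r` telescope down from `r = l` to
`(N / 3) σ₃ ∈ D`, and `3 α₂ = σ₃ - (α₁ - α₂) + (α₂ - α₃)` gives `N α₂ ∈ D`. Hence
`{m | m • α₂ ∈ D} = Nℤ`, and this ideal computes the index.
-/

/-- The standard basis vector `α_i` (0-indexed) of `L = ℤ^l`. -/
def al (l : ℕ) (i : ℕ) : Fin l → ℤ := fun j => if (j : ℕ) = i then 1 else 0

/-- `γ_r = α₁ + ⋯ + α_r - r·α_{r+1}` for `r ≤ l-1`, and `γ_l = α₁ + ⋯ + α_l`. -/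
def ga (l r : ℕ) : Fin l → ℤ :=
  fun j => if (j : ℕ) < r then 1 else if (j : ℕ) = r then -(r : ℤ) else 0

/-- `D = E + ℤγ₃ + ⋯ + ℤγ_l` where `E = ℤ(α₁-α₂) + ℤ(α₂-α₃)`. -/
def D (l : ℕ) : Submodule ℤ (Fin l → ℤ) :=
  Submodule.span ℤ ({al l 0 - al l 1, al l 1 - al l 2} ∪
    {x | ∃ r : ℕ, 3 ≤ r ∧ r ≤ l ∧ x = ga l r})

theorem AddSubgroup.relIndex_sup_zmultiples_of_zsmul_mem_iff {G : Type*} [AddCommGroup G]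
    (H : AddSubgroup G) (v : G) (n : ℕ) (h : ∀ m : ℤ, m • v ∈ H ↔ (n : ℤ) ∣ m) :
    H.relIndex (H ⊔ zmultiples v) = n := by
  have hcomap : H.comap (zmultiplesHom G v) = zmultiples (n : ℤ) := by
    ext m
    simp [h, Int.mem_zmultiples_iff]
  rw [relIndex_sup_left, ← range_zmultiplesHom, ← index_comap, hcomap, Int.index_zmultiples,
    Int.natAbs_natCast]

open Finset

def sumUpTo (l r : ℕ) : (Fin l → ℤ) →ₗ[ℤ] ℤ where
  toFun x := ∑ j : Fin l, if (j : ℕ) < r then x j else 0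
  map_add' x y := by simp only [Pi.add_apply, ← sum_add_distrib, ite_add_ite, add_zero]
  map_smul' c x := by simp [mul_sum]

lemma sumUpTo_apply_of_le {l r : ℕ} (hr : r ≤ l) (f : ℕ → ℤ) :
    sumUpTo l r (fun j => f j) = ∑ k ∈ range r, f k := by
  have hfilter : (range l).filter (· < r) = range r := by
    ext k; simp only [mem_filter, mem_range]; omega
  change ∑ j : Fin l, (if (j : ℕ) < r then f j else 0) = _
  rw [Fin.sum_univ_eq_sum_range (fun k => if k < r then f k else 0) l, ← sum_filter, hfilter]

lemma sumUpTo_al {l r : ℕ} (hr : r ≤ l) (i : ℕ) :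
    sumUpTo l r (al l i) = if i < r then 1 else 0 :=
  (sumUpTo_apply_of_le hr (fun k => if k = i then 1 else 0)).trans (by simp [sum_ite_eq'])

lemma sum_range_ga_coeff (r s : ℕ) :
    ∑ k ∈ range r, (if k < s then 1 else if k = s then -(s : ℤ) else 0) =
      if r ≤ s then (r : ℤ) else 0 := by
  induction r with
  | zero => simp
  | succ r ih =>
    rw [sum_range_succ, ih]
    split_ifs <;> push_cast <;> omega

lemma sumUpTo_ga {l r : ℕ} (hr : r ≤ l) (s : ℕ) :
    sumUpTo l r (ga l s) = if r ≤ s then (r : ℤ) else 0 :=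
  (sumUpTo_apply_of_le hr (fun k => if k < s then 1 else if k = s then -(s : ℤ) else 0)).trans
    (sum_range_ga_coeff r s)

lemma dvd_sumUpTo_of_mem_D {l r : ℕ} (h3 : 3 ≤ r) (hr : r ≤ l) {x : Fin l → ℤ}
    (hx : x ∈ D l) : (r : ℤ) ∣ sumUpTo l r x := by
  suffices D l ≤ Submodule.comap (sumUpTo l r) (Ideal.span {(r : ℤ)}) from
    Ideal.mem_span_singleton.mp (this hx)
  refine Submodule.span_le.mpr ?_
  rintro _ ((rfl | rfl) | ⟨s, -, -, rfl⟩) <;>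
    simp only [SetLike.mem_coe, Submodule.mem_comap, Ideal.mem_span_singleton, map_sub,
      sumUpTo_al hr, sumUpTo_ga hr]
  · simp [show 0 < r by omega, show 1 < r by omega]
  · simp [show 1 < r by omega, show 2 < r by omega]
  · split_ifs <;> simp

def onesUpTo (l r : ℕ) : Fin l → ℤ := fun j => if (j : ℕ) < r then 1 else 0

lemma ga_eq_sub_onesUpTo (l r : ℕ) :
    ga l r = ((r : ℤ) + 1) • onesUpTo l r - (r : ℤ) • onesUpTo l (r + 1) := by
  funext j
  simp only [ga, onesUpTo, Pi.sub_apply, Pi.smul_apply, smul_eq_mul]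
  split_ifs <;> omega

lemma onesUpTo_self (l : ℕ) : onesUpTo l l = ga l l := by
  funext j
  simp [onesUpTo, ga]

lemma three_smul_al_one (l : ℕ) :
    (3 : ℤ) • al l 1 = onesUpTo l 3 - (al l 0 - al l 1) + (al l 1 - al l 2) := by
  funext j
  simp only [al, onesUpTo, Pi.add_apply, Pi.sub_apply, Pi.smul_apply, smul_eq_mul]
  split_ifs <;> omega

lemma ga_mem_D {l r : ℕ} (h3 : 3 ≤ r) (hr : r ≤ l) : ga l r ∈ D l :=
  Submodule.subset_span (Or.inr ⟨r, h3, hr, rfl⟩)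

lemma smul_onesUpTo_three_mem_D {l : ℕ} (hl : 3 ≤ l) {n : ℤ}
    (hn : ∀ r ∈ Icc 3 l, (r : ℤ) ∣ n) : (n / 3) • onesUpTo l 3 ∈ D l := by
  have key := Nat.decreasingInduction' (m := 3) (P := fun r : ℕ => (n / r) • onesUpTo l r ∈ D l)
    (fun r hrl h3r ih => ?_) hl ?_
  · simpa using key
  · obtain ⟨m, rfl⟩ : (r : ℤ) * (r + 1) ∣ n := IsCoprime.mul_dvd ⟨-1, 1, by ring⟩
      (hn r (mem_Icc.mpr ⟨h3r, hrl.le⟩))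
      (by exact_mod_cast hn (r + 1) (mem_Icc.mpr ⟨by omega, hrl⟩))
    have hr0 : (r : ℤ) ≠ 0 := by positivity
    have hr1 : (r : ℤ) + 1 ≠ 0 := by positivity
    have hstep : (((r : ℤ) + 1) * m) • onesUpTo l r =
        m • ga l r + ((r : ℤ) * m) • onesUpTo l (r + 1) := by
      rw [ga_eq_sub_onesUpTo, smul_sub, smul_smul, smul_smul, mul_comm m, mul_comm m]
      abel
    simp only [Nat.cast_succ, mul_assoc, Int.mul_ediv_cancel_left _ hr0] at ih ⊢
    rw [mul_left_comm, Int.mul_ediv_cancel_left _ hr1] at ih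
    rw [hstep]
    exact (D l).add_mem ((D l).smul_mem m (ga_mem_D h3r hrl.le)) ih
  · simpa [onesUpTo_self] using (D l).smul_mem (n / l) (ga_mem_D hl le_rfl)

lemma zsmul_al_one_mem_D_iff {l : ℕ} (hl : 3 ≤ l) (m : ℤ) :
    m • al l 1 ∈ D l ↔ (((Icc 3 l).lcm id : ℕ) : ℤ) ∣ m := by
  set N := (Icc 3 l).lcm id
  constructor
  · intro hm
    refine Int.natCast_dvd.mpr (Finset.lcm_dvd fun r hr => Int.natCast_dvd.mp ?_)
    obtain ⟨h3, hrl⟩ := mem_Icc.mp hr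
    have := dvd_sumUpTo_of_mem_D h3 hrl hm
    rwa [map_zsmul, sumUpTo_al hrl, if_pos (by omega), smul_eq_mul, mul_one] at this
  · rintro ⟨k, rfl⟩
    have hN : ∀ r ∈ Icc 3 l, (r : ℤ) ∣ N := fun r hr => Int.natCast_dvd_natCast.mpr (dvd_lcm hr)
    have hNα : (N : ℤ) • al l 1 ∈ D l := by
      have h3 : (3 : ℤ) ∣ N := hN 3 (mem_Icc.mpr ⟨le_rfl, hl⟩)
      rw [← Int.ediv_mul_cancel h3, mul_smul, three_smul_al_one, smul_add, smul_sub]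
      exact (D l).add_mem ((D l).sub_mem (smul_onesUpTo_three_mem_D hl hN)
        ((D l).smul_mem _ (Submodule.subset_span (by simp))))
        ((D l).smul_mem _ (Submodule.subset_span (by simp)))
    rw [mul_comm, mul_smul]
    exact (D l).smul_mem k hNα

/-- The index `|D + ℤα₂ : D|` equals `lcm(3, 4, …, l)`. -/
theorem stmt7 (l : ℕ) (hl : 4 ≤ l) :
    AddSubgroup.relIndex (D l).toAddSubgroup
      ((D l) ⊔ Submodule.span ℤ {al l 1}).toAddSubgroup
      = (Finset.Icc 3 l).lcm id := by
  rw [Submodule.sup_toAddSubgroup, Submodule.span_singleton_toAddSubgroup_eq_zmultiples]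
  exact AddSubgroup.relIndex_sup_zmultiples_of_zsmul_mem_iff _ _ _
    (zsmul_al_one_mem_D_iff (by omega))
end

section
/- The elements λ(m₃, …, m_{l−2}, n) = Σ_{r=3}^{l−2} m_r(α_r − α_{r+1}) + nα₂, for 0 ≤ m_r ≤ r−1 (3 ≤ r ≤ l−2) and 0 ≤ n ≤ l(l−1)−1, form a complete system of representatives of the cosets of D in L. -/
/-- `λ(m₃, …, m_{l-2}, n) = ∑_{r=3}^{l-2} m_r (α_r - α_{r+1}) + n α₂`
(1-indexed `α`, so `α_r - α_{r+1} = al l (r-1) - al l r` and `α₂ = al l 1`). -/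
def lam (l : ℕ) (m : ℕ → ℕ) (n : ℕ) : Fin l → ℤ :=
  (∑ r ∈ Finset.Icc 3 (l - 2), (m r : ℤ) • (al l (r - 1) - al l r))
    + (n : ℤ) • al l 1

namespace Stmt11Aux

def psum (l : ℕ) (x : Fin l → ℤ) (j : ℕ) : ℤ :=
  ∑ i : Fin l, if (i : ℕ) < j then x i else 0

variable {l : ℕ}

lemma psum_zero' (j : ℕ) : psum l 0 j = 0 := by simp [psum]

lemma psum_add (x y : Fin l → ℤ) (j : ℕ) :
    psum l (x + y) j = psum l x j + psum l y j := by
  simp only [psum, Pi.add_apply, ← Finset.sum_add_distrib]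
  exact Finset.sum_congr rfl fun i _ => by split <;> simp

lemma psum_sub (x y : Fin l → ℤ) (j : ℕ) :
    psum l (x - y) j = psum l x j - psum l y j := by
  simp only [psum, Pi.sub_apply, ← Finset.sum_sub_distrib]
  exact Finset.sum_congr rfl fun i _ => by split <;> simp

lemma psum_smul (c : ℤ) (x : Fin l → ℤ) (j : ℕ) :
    psum l (c • x) j = c * psum l x j := by
  simp only [psum, Pi.smul_apply, smul_eq_mul, Finset.mul_sum]
  exact Finset.sum_congr rfl fun i _ => by split <;> simp

lemma psum_sum {α : Type*} (s : Finset α) (f : α → Fin l → ℤ) (j : ℕ) :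
    psum l (∑ r ∈ s, f r) j = ∑ r ∈ s, psum l (f r) j := by
  calc psum l (∑ r ∈ s, f r) j
      = ∑ i : Fin l, ∑ r ∈ s, (if (i:ℕ) < j then f r i else 0) := by
        refine Finset.sum_congr rfl fun i _ => ?_
        rw [Finset.sum_apply]
        split <;> simp
    _ = ∑ r ∈ s, psum l (f r) j := Finset.sum_comm

lemma psum_al (k j : ℕ) (hk : k < l) :
    psum l (al l k) j = if k < j then 1 else 0 := by
  unfold psum al
  rw [Finset.sum_eq_single (⟨k, hk⟩ : Fin l)]
  · simp
  · intro i _ hne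
    have : (i : ℕ) ≠ k := fun h => hne (Fin.ext h)
    simp [this]
  · simp

lemma sum_ind (j : ℕ) (hj : j ≤ l) :
    (∑ i : Fin l, if (i : ℕ) < j then (1 : ℤ) else 0) = j := by
  rw [Fin.sum_univ_eq_sum_range (fun i => if i < j then (1 : ℤ) else 0) l]
  have h : ∀ i, (if i < j then (1:ℤ) else 0) = if i ∈ Finset.range j then 1 else 0 := by
    intro i; simp
  simp_rw [h]
  rw [Finset.sum_ite_mem, Finset.inter_eq_right.mpr (Finset.range_subset_range.mpr hj)]
  simp

lemma psum_succ (x : Fin l → ℤ) (j : ℕ) (hj : j < l) :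
    psum l x (j + 1) = psum l x j + x ⟨j, hj⟩ := by
  unfold psum
  have h : ∀ i : Fin l, (if (i:ℕ) < j + 1 then x i else 0)
      = (if (i:ℕ) < j then x i else 0) + (if i = ⟨j, hj⟩ then x i else 0) := by
    intro i
    rcases Nat.lt_trichotomy (i : ℕ) j with h | h | h
    · simp [h, Nat.lt_succ_of_lt h, show i ≠ ⟨j, hj⟩ from fun he => by simp [he] at h]
    · have : i = ⟨j, hj⟩ := Fin.ext h
      simp [this, h]
    · simp [Nat.lt_irrefl, show ¬ (i:ℕ) < j + 1 by omega, show ¬ (i:ℕ) < j by omega,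
        show i ≠ ⟨j, hj⟩ from fun he => by simp [he] at h]
  simp_rw [h]
  rw [Finset.sum_add_distrib, Finset.sum_ite_eq' Finset.univ (⟨j, hj⟩ : Fin l) x]
  simp

lemma psum_ga (r j : ℕ) (hj : j ≤ l) :
    psum l (ga l r) j = if j ≤ r then (j : ℤ) else 0 := by
  by_cases hjr : j ≤ r
  · rw [if_pos hjr]
    unfold psum
    rw [show (∑ i : Fin l, if (i:ℕ) < j then ga l r i else 0)
        = ∑ i : Fin l, if (i:ℕ) < j then (1:ℤ) else 0 from
      Finset.sum_congr rfl fun i _ => by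
        by_cases h : (i:ℕ) < j
        · simp only [if_pos h, ga]; rw [if_pos (by omega)]
        · simp [h]]
    exact sum_ind j hj
  · rw [if_neg hjr]
    push_neg at hjr
    have hrl : r < l := lt_of_lt_of_le hjr hj
    unfold psum
    rw [show (∑ i : Fin l, if (i:ℕ) < j then ga l r i else 0)
        = ∑ i : Fin l, ((if (i:ℕ) < r then (1:ℤ) else 0)
            + (if i = ⟨r, hrl⟩ then -(r:ℤ) else 0)) from
      Finset.sum_congr rfl fun i _ => by
        simp only [ga, Fin.ext_iff]
        split_ifs <;> omega]
    rw [Finset.sum_add_distrib, sum_ind r (le_of_lt hrl),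
      Finset.sum_ite_eq' Finset.univ (⟨r, hrl⟩ : Fin l) (fun _ => -(r:ℤ))]
    simp

lemma u0_mem : al l 0 - al l 1 ∈ D l :=
  Submodule.subset_span (Set.mem_union_left _ (Set.mem_insert _ _))

lemma u1_mem : al l 1 - al l 2 ∈ D l :=
  Submodule.subset_span (Set.mem_union_left _ (Set.mem_insert_of_mem _ rfl))

lemma ga_mem (r : ℕ) (h3 : 3 ≤ r) (hrl : r ≤ l) : ga l r ∈ D l :=
  Submodule.subset_span (Set.mem_union_right _ ⟨r, h3, hrl, rfl⟩)

lemma W_mem (hl : 5 ≤ l) (r : ℕ) (h2 : 2 ≤ r) (hr : r ≤ l - 1) :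
    ((r : ℤ) + 1) • (al l r - al l (r + 1)) ∈ D l := by
  rcases eq_or_lt_of_le h2 with h | h
  · have key : ((r:ℤ) + 1) • (al l r - al l (r + 1))
        = ga l 3 - ((al l 0 - al l 1) + (2:ℤ) • (al l 1 - al l 2)) := by
      funext i
      simp only [Pi.smul_apply, Pi.sub_apply, Pi.add_apply, smul_eq_mul, al, ga, ← h]
      norm_num
      split_ifs <;> omega
    rw [key]
    exact sub_mem (ga_mem 3 le_rfl (by omega)) (add_mem u0_mem (Submodule.smul_mem _ _ u1_mem))
  · have h3 : 3 ≤ r := h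
    have key : ((r:ℤ) + 1) • (al l r - al l (r + 1)) = ga l (r + 1) - ga l r := by
      funext i
      simp only [Pi.smul_apply, Pi.sub_apply, smul_eq_mul, al, ga]
      push_cast
      split_ifs <;> omega
    rw [key]
    exact sub_mem (ga_mem (r+1) (by omega) (by omega)) (ga_mem r h3 (by omega))

lemma sum_eval (c : ℕ → ℤ) (a b : ℕ) (k : Fin l) :
    (∑ r ∈ Finset.Icc a b, c r • (al l r - al l (r + 1))) k
      = (if a ≤ (k:ℕ) ∧ (k:ℕ) ≤ b then c (k:ℕ) else 0)
        - (if a + 1 ≤ (k:ℕ) ∧ (k:ℕ) ≤ b + 1 then c ((k:ℕ) - 1) else 0) := by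
  rw [Finset.sum_apply]
  have term : ∀ r ∈ Finset.Icc a b,
      (c r • (al l r - al l (r + 1))) k
        = (if r = (k:ℕ) then c r else 0) - (if 1 ≤ (k:ℕ) ∧ r = (k:ℕ) - 1 then c r else 0) := by
    intro r _
    simp only [Pi.smul_apply, Pi.sub_apply, smul_eq_mul, al]
    split_ifs <;> omega
  rw [Finset.sum_congr rfl term, Finset.sum_sub_distrib,
    Finset.sum_ite_eq' (Finset.Icc a b) ((k:ℕ)) c]
  by_cases h1 : 1 ≤ (k:ℕ)
  · rw [show (fun r => if 1 ≤ (k:ℕ) ∧ r = (k:ℕ) - 1 then c r else 0)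
        = fun r => if r = (k:ℕ) - 1 then c r else 0 from funext fun r => by
          split_ifs <;> simp_all]
    rw [Finset.sum_ite_eq' (Finset.Icc a b) ((k:ℕ) - 1) c]
    simp only [Finset.mem_Icc]
    congr 1
    split_ifs <;> first | rfl | omega | (exfalso; omega)
  · rw [show (fun r => if 1 ≤ (k:ℕ) ∧ r = (k:ℕ) - 1 then c r else 0)
        = fun _ => (0:ℤ) from funext fun r => by split_ifs <;> simp_all]
    simp only [Finset.mem_Icc, Finset.sum_const_zero]
    congr 1
    split_ifs <;> first | rfl | omega | (exfalso; omega)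

lemma recon (hl : 5 ≤ l) (x : Fin l → ℤ) :
    x = psum l x 1 • (al l 0 - al l 1) + psum l x 2 • (al l 1 - al l 2)
      + ∑ r ∈ Finset.Icc 2 (l - 1), psum l x (r + 1) • (al l r - al l (r + 1)) := by
  funext k
  obtain ⟨kv, hkv⟩ := k
  rw [Pi.add_apply, Pi.add_apply, sum_eval]
  simp only [Pi.smul_apply, Pi.sub_apply, smul_eq_mul, al, Fin.val_mk]
  have h0 : psum l x 0 = 0 := by simp [psum]
  rcases Nat.lt_or_ge kv 3 with h3 | h3
  · interval_cases kv
    · have e1 : psum l x 1 = psum l x 0 + x ⟨0, hkv⟩ := psum_succ x 0 hkv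
      rw [if_neg (show ¬((2:ℕ) ≤ 0 ∧ 0 ≤ l - 1) by omega),
        if_neg (show ¬((2:ℕ) + 1 ≤ 0 ∧ 0 ≤ l - 1 + 1) by omega)]
      norm_num
      linarith
    · have e1 : psum l x 1 = psum l x 0 + x ⟨0, by omega⟩ := psum_succ x 0 (by omega)
      have e2 : psum l x 2 = psum l x 1 + x ⟨1, hkv⟩ := psum_succ x 1 hkv
      rw [if_neg (show ¬((2:ℕ) ≤ 1 ∧ 1 ≤ l - 1) by omega),
        if_neg (show ¬((2:ℕ) + 1 ≤ 1 ∧ 1 ≤ l - 1 + 1) by omega)]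
      norm_num
      linarith
    · have e2 : psum l x 2 = psum l x 1 + x ⟨1, by omega⟩ := psum_succ x 1 (by omega)
      have e3 : psum l x 3 = psum l x 2 + x ⟨2, hkv⟩ := psum_succ x 2 hkv
      rw [if_pos (show (2:ℕ) ≤ 2 ∧ 2 ≤ l - 1 by omega),
        if_neg (show ¬((2:ℕ) + 1 ≤ 2 ∧ 2 ≤ l - 1 + 1) by omega)]
      norm_num
      linarith
  · have ea : psum l x (kv + 1) = psum l x kv + x ⟨kv, hkv⟩ := psum_succ x kv hkv
    rw [if_pos (show 2 ≤ kv ∧ kv ≤ l - 1 by omega),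
      if_pos (show 2 + 1 ≤ kv ∧ kv ≤ l - 1 + 1 by omega),
      show kv - 1 + 1 = kv from by omega,
      if_neg (show ¬ kv = 0 by omega), if_neg (show ¬ kv = 1 by omega),
      if_neg (show ¬ kv = 2 by omega)]
    linarith

theorem mem_D_iff (hl : 5 ≤ l) (x : Fin l → ℤ) :
    x ∈ D l ↔ ∀ j, 3 ≤ j → j ≤ l → (j : ℤ) ∣ psum l x j := by
  constructor
  · intro hx
    induction hx using Submodule.span_induction with
    | mem y hy =>
      simp only [Set.mem_union, Set.mem_insert_iff, Set.mem_singleton_iff,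
        Set.mem_setOf_eq] at hy
      rcases hy with (rfl | rfl) | ⟨r, hr3, hrl, rfl⟩
      · intro j h3 hjl
        rw [psum_sub, psum_al 0 j (by omega), psum_al 1 j (by omega),
          if_pos (by omega), if_pos (by omega)]
        simp
      · intro j h3 hjl
        rw [psum_sub, psum_al 1 j (by omega), psum_al 2 j (by omega),
          if_pos (by omega), if_pos (by omega)]
        simp
      · intro j h3 hjl
        rw [psum_ga r j hjl]
        split_ifs
        · exact dvd_refl _
        · exact dvd_zero _
    | zero => intro j _ _; rw [psum_zero']; exact dvd_zero _
    | add y z hy hz ihy ihz =>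
      intro j h3 hjl
      rw [psum_add]
      exact dvd_add (ihy j h3 hjl) (ihz j h3 hjl)
    | smul c y hy ihy =>
      intro j h3 hjl
      rw [psum_smul]
      exact Dvd.dvd.mul_left (ihy j h3 hjl) c
  · intro hdvd
    rw [recon hl x]
    refine add_mem (add_mem ?_ ?_) ?_
    · exact Submodule.smul_mem _ _ u0_mem
    · exact Submodule.smul_mem _ _ u1_mem
    · refine Submodule.sum_mem _ fun r hr => ?_
      simp only [Finset.mem_Icc] at hr
      obtain ⟨c, hc⟩ := hdvd (r + 1) (by omega) (by omega)
      rw [hc, show ((((r:ℕ) + 1 : ℕ) : ℤ) * c) • (al l r - al l (r + 1))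
          = c • (((r : ℤ) + 1) • (al l r - al l (r + 1))) from by
        rw [smul_smul]; push_cast; ring_nf]
      exact Submodule.smul_mem _ _ (W_mem hl r hr.1 hr.2)

lemma psum_lam (hl : 5 ≤ l) (m : ℕ → ℕ) (n j : ℕ) (hj2 : 2 ≤ j) (hjl : j ≤ l) :
    psum l (lam l m n) j = (n : ℤ) + if 3 ≤ j ∧ j ≤ l - 2 then (m j : ℤ) else 0 := by
  unfold lam
  rw [psum_add, psum_sum, psum_smul, psum_al 1 j (by omega), if_pos (by omega), mul_one]
  have term : ∀ r ∈ Finset.Icc 3 (l - 2),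
      psum l ((m r : ℤ) • (al l (r - 1) - al l r)) j = if r = j then (m r : ℤ) else 0 := by
    intro r hr
    simp only [Finset.mem_Icc] at hr
    rw [psum_smul, psum_sub, psum_al (r - 1) j (by omega), psum_al r j (by omega)]
    split_ifs <;> first | omega | (exfalso; omega) | simp | (ring_nf; omega)
  rw [Finset.sum_congr rfl term, Finset.sum_ite_eq' (Finset.Icc 3 (l - 2)) j
    (fun r => (m r : ℤ))]
  simp only [Finset.mem_Icc]
  ring

lemma eq_zero_small {a b : ℤ} (h : b ∣ a) (h1 : -b < a) (h2 : a < b) : a = 0 := by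
  by_contra hne
  have hb : b ≤ |a| := Int.le_of_dvd (abs_pos.mpr hne) ((dvd_abs b a).mpr h)
  rcases abs_cases a with ⟨he, _⟩ | ⟨he, _⟩ <;> omega

end Stmt11Aux

open Stmt11Aux

/-- The elements `λ(m₃, …, m_{l-2}, n)` with `0 ≤ m_r ≤ r-1` and
`0 ≤ n ≤ l(l-1)-1` form a complete system of representatives of the cosets of
`D` in `L`: every `x ∈ L` is congruent mod `D` to exactly one such `λ`. -/
theorem stmt11 (l : ℕ) (hl : 5 ≤ l) :
    ∀ x : Fin l → ℤ, ∃! p : (ℕ → ℕ) × ℕ,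
      (∀ r : ℕ, 3 ≤ r → r ≤ l - 2 → p.1 r ≤ r - 1) ∧
      (∀ r : ℕ, ¬(3 ≤ r ∧ r ≤ l - 2) → p.1 r = 0) ∧
      p.2 ≤ l * (l - 1) - 1 ∧
      x - lam l p.1 p.2 ∈ D l := by
  intro x
  have hl5 : (5:ℤ) ≤ (l:ℤ) := by exact_mod_cast hl
  have hPpos : (0:ℤ) < (l:ℤ) * ((l:ℤ) - 1) := by nlinarith
  have hPc : ((l * (l - 1) : ℕ) : ℤ) = (l:ℤ) * ((l:ℤ) - 1) := by
    rw [Nat.cast_mul, Nat.cast_sub (show 1 ≤ l by omega), Nat.cast_one]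
  set t : ℤ := (psum l x (l-1) - psum l x l) % ((l:ℤ) - 1) with htdef
  set N : ℤ := (psum l x l + (l:ℤ) * t) % ((l:ℤ) * ((l:ℤ) - 1)) with hNdef
  have hN0 : 0 ≤ N := Int.emod_nonneg _ (ne_of_gt hPpos)
  have hNlt : N < (l:ℤ) * ((l:ℤ) - 1) := Int.emod_lt_of_pos _ hPpos
  have hdl : (l:ℤ) ∣ N - psum l x l :=
    ⟨t - ((l:ℤ) - 1) * ((psum l x l + (l:ℤ)*t) / ((l:ℤ)*((l:ℤ)-1))), by
      rw [hNdef, Int.emod_def]; ring⟩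
  have hdl1 : ((l:ℤ) - 1) ∣ N - psum l x (l-1) :=
    ⟨psum l x (l-1) - psum l x l - (l:ℤ) * ((psum l x (l-1) - psum l x l) / ((l:ℤ)-1))
       - (l:ℤ) * ((psum l x l + (l:ℤ)*t) / ((l:ℤ)*((l:ℤ)-1))), by
      rw [hNdef, Int.emod_def, htdef, Int.emod_def]; ring⟩
  set n : ℕ := N.toNat with hn
  have hNn : (n:ℤ) = N := Int.toNat_of_nonneg hN0
  set m : ℕ → ℕ := fun j => if 3 ≤ j ∧ j ≤ l - 2 then ((psum l x j - N) % (j:ℤ)).toNat else 0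
    with hm
  have cond : ∀ (m' : ℕ → ℕ) (n' : ℕ), (x - lam l m' n' ∈ D l ↔
      ∀ j, 3 ≤ j → j ≤ l →
        (j:ℤ) ∣ psum l x j - ((n':ℤ) + if 3 ≤ j ∧ j ≤ l - 2 then (m' j : ℤ) else 0)) := by
    intro m' n'
    rw [mem_D_iff hl]
    refine forall_congr' fun j => imp_congr_right fun h3 => imp_congr_right fun hjl => ?_
    rw [psum_sub, psum_lam hl m' n' j (by omega) hjl]
  have hm_bound : ∀ r, 3 ≤ r → r ≤ l - 2 → m r ≤ r - 1 := by
    intro r h3 hr2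
    simp only [hm]
    rw [if_pos ⟨h3, hr2⟩]
    have hr0 : (0:ℤ) < (r:ℤ) := by exact_mod_cast (show 0 < r by omega)
    have h1 := Int.emod_nonneg (psum l x r - N) (show (r:ℤ) ≠ 0 by omega)
    have h2 := Int.emod_lt_of_pos (psum l x r - N) hr0
    omega
  have hm_zero : ∀ r, ¬(3 ≤ r ∧ r ≤ l - 2) → m r = 0 := by
    intro r hr; simp only [hm]; rw [if_neg hr]
  have hn_bound : n ≤ l * (l - 1) - 1 := by
    have h1 : 1 * 1 ≤ l * (l - 1) := Nat.mul_le_mul (by omega) (by omega)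
    have hcast : (n:ℤ) < ((l * (l - 1) : ℕ) : ℤ) := by rw [hNn, hPc]; exact hNlt
    have : n < l * (l - 1) := by exact_mod_cast hcast
    omega
  have hmem : x - lam l m n ∈ D l := by
    rw [cond m n]
    intro j h3 hjl
    by_cases hj2 : j ≤ l - 2
    · rw [if_pos ⟨h3, hj2⟩]
      simp only [hm]
      rw [if_pos ⟨h3, hj2⟩]
      have hnn : (((psum l x j - N) % (j:ℤ)).toNat : ℤ) = (psum l x j - N) % (j:ℤ) :=
        Int.toNat_of_nonneg (Int.emod_nonneg _ (show (j:ℤ) ≠ 0 by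
          exact_mod_cast (show j ≠ 0 by omega)))
      rw [hNn, hnn]
      refine ⟨(psum l x j - N) / (j:ℤ), ?_⟩
      rw [Int.emod_def]
      ring
    · rw [if_neg (by omega), hNn]
      have hcases : j = l - 1 ∨ j = l := by omega
      rcases hcases with hj1 | hj1
      · subst hj1
        have hc : ((l - 1 : ℕ) : ℤ) = (l:ℤ) - 1 := by omega
        rw [hc, show psum l x (l-1) - (N + 0) = -(N - psum l x (l-1)) by ring]
        exact dvd_neg.mpr hdl1
      · rw [hj1, show psum l x l - (N + 0) = -(N - psum l x l) by ring]
        exact dvd_neg.mpr hdl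
  refine ⟨⟨m, n⟩, ⟨hm_bound, hm_zero, hn_bound, hmem⟩, ?_⟩
  rintro ⟨m', n'⟩ ⟨hb1, hb2, hb3, hb4⟩
  dsimp only at hb1 hb2 hb3 hb4
  have c' := (cond m' n').mp hb4
  have c0 := (cond m n).mp hmem
  have hdn : ∀ j : ℕ, 3 ≤ j → j ≤ l → ¬(3 ≤ j ∧ j ≤ l - 2) → (j:ℤ) ∣ (n':ℤ) - (n:ℤ) := by
    intro j h3 hjl hnot
    have h1 := c' j h3 hjl
    have h2 := c0 j h3 hjl
    rw [if_neg hnot] at h1 h2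
    have h12 := dvd_sub h2 h1
    rwa [show psum l x j - ((n:ℤ) + 0) - (psum l x j - ((n':ℤ) + 0)) = (n':ℤ) - n by ring]
      at h12
  have hc : ((l - 1 : ℕ) : ℤ) = (l:ℤ) - 1 := by omega
  have d1 : ((l:ℤ) - 1) ∣ (n':ℤ) - n := by
    rw [← hc]; exact hdn (l-1) (by omega) (by omega) (by omega)
  have d2 : (l:ℤ) ∣ (n':ℤ) - n := hdn l (by omega) le_rfl (by omega)
  have dcop : IsCoprime ((l:ℤ) - 1) (l:ℤ) := ⟨-1, 1, by ring⟩
  have dP : ((l:ℤ) * ((l:ℤ) - 1)) ∣ (n':ℤ) - n := by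
    have h := dcop.mul_dvd d1 d2; rwa [mul_comm] at h
  have hnlt' : (n:ℤ) < (l:ℤ) * ((l:ℤ) - 1) := by rw [hNn]; exact hNlt
  have hb3' : (n':ℤ) < (l:ℤ) * ((l:ℤ) - 1) := by
    have h0 : 1 * 1 ≤ l * (l - 1) := Nat.mul_le_mul (by omega) (by omega)
    have h1 : n' < l * (l - 1) := by omega
    calc (n':ℤ) < ((l * (l-1) : ℕ) : ℤ) := by exact_mod_cast h1
    _ = _ := hPc
  have hn0 : (0:ℤ) ≤ (n:ℤ) := Int.natCast_nonneg n
  have hn0' : (0:ℤ) ≤ (n':ℤ) := Int.natCast_nonneg n'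
  have hzero : (n':ℤ) - n = 0 := eq_zero_small dP (by linarith) (by linarith)
  have hne : n' = n := by omega
  subst hne
  have hmj : ∀ j, m' j = m j := by
    intro j
    by_cases hj : 3 ≤ j ∧ j ≤ l - 2
    · have h1 := c' j hj.1 (by omega)
      have h2 := c0 j hj.1 (by omega)
      rw [if_pos hj] at h1 h2
      have h12 := dvd_sub h2 h1
      rw [show psum l x j - ((n:ℤ) + (m j:ℤ)) - (psum l x j - ((n:ℤ) + (m' j:ℤ)))
          = (m' j:ℤ) - m j by ring] at h12
      have bm := hb1 j hj.1 hj.2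
      have bm2 := hm_bound j hj.1 hj.2
      have hz : (m' j : ℤ) - m j = 0 := eq_zero_small h12 (by omega) (by omega)
      omega
    · rw [hb2 j hj, hm_zero j hj]
  simp only [Prod.mk.injEq]
  exact ⟨funext hmj, trivial⟩
end
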